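/- arXiv:2408.16721 — 2 statements merged into one kernel-verified Lean document; each statement's English description precedes it below -/
import Mathlib

section
/- Let D be a (v,k,λ)-difference set in a finite abelian group G (every nonzero element occurs exactly λ times as a difference of elements of D). If g ∈ G \ D and (g - D) ∩ (D - g) = ∅, then D ∪ {g} is a (v, k+1, λ, v-1-2k)-almost difference set. -/
open Finset

def diffCount {G : Type*} [AddCommGroup G] [DecidableEq G] (D : Finset G) (g : G) : ℕ :=
  ((D ×ˢ D).filter (fun p => p.1 - p.2 = g)).card

def IsDiffSet {G : Type*} [AddCommGroup G] [Fintype G] [DecidableEq G]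
    (v k lam : ℕ) (D : Finset G) : Prop :=
  Fintype.card G = v ∧ D.card = k ∧ ∀ g : G, g ≠ 0 → diffCount D g = lam

def IsADS {G : Type*} [AddCommGroup G] [Fintype G] [DecidableEq G]
    (v k lam t : ℕ) (D : Finset G) : Prop :=
  Fintype.card G = v ∧ D.card = k ∧
  (univ.filter (fun g : G => g ≠ 0 ∧ diffCount D g = lam)).card = t ∧
  ∀ g : G, g ≠ 0 → diffCount D g = lam ∨ diffCount D g = lam + 1

/-- Sumset of distinct pairs: `S(D) = {a + b : a ≠ b ∈ D}`. -/
def sumset {G : Type*} [AddCommGroup G] [DecidableEq G] (D : Finset G) : Finset G :=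
  D.offDiag.image (fun p => p.1 + p.2)

theorem ads_of_add_element {G : Type*} [AddCommGroup G] [Fintype G] [DecidableEq G]
    (v k lam : ℕ) (D : Finset G) (hD : IsDiffSet v k lam D) (g : G) (hg : g ∉ D)
    (hint : (D.image (fun d => g - d)) ∩ (D.image (fun d => d - g)) = ∅) :
    IsADS v (k + 1) lam (v - 1 - 2 * k) (insert g D) := by
  obtain ⟨hv, hk, hlam⟩ := hD
  set A := D.image (fun d => g - d) with hA
  set B := D.image (fun d => d - g) with hB
  have hgD : Disjoint ({g} : Finset G) D := by simp [hg]
  -- key counting lemma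
  have key : ∀ x : G, x ≠ 0 →
      diffCount (insert g D) x = lam + (if x ∈ A ∪ B then 1 else 0) := by
    intro x hx
    unfold diffCount
    rw [insert_eq, Finset.union_product, Finset.product_union, Finset.product_union,
        Finset.filter_union, Finset.filter_union, Finset.filter_union]
    have d1 : Disjoint (({g} : Finset G) ×ˢ ({g} : Finset G)) (({g} : Finset G) ×ˢ D) :=
      Finset.disjoint_product.mpr (Or.inr hgD)
    have d3 : Disjoint (D ×ˢ ({g} : Finset G)) (D ×ˢ D) :=
      Finset.disjoint_product.mpr (Or.inr hgD)
    have e2 : Disjoint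
        (((({g} : Finset G) ×ˢ ({g} : Finset G)).filter (fun p => p.1 - p.2 = x)) ∪
          ((({g} : Finset G) ×ˢ D).filter (fun p => p.1 - p.2 = x)))
        (((D ×ˢ ({g} : Finset G)).filter (fun p => p.1 - p.2 = x)) ∪
          ((D ×ˢ D).filter (fun p => p.1 - p.2 = x))) := by
      apply Finset.disjoint_union_left.mpr
      constructor <;> apply Finset.disjoint_union_right.mpr <;>
        exact ⟨Finset.disjoint_filter_filter (Finset.disjoint_product.mpr (Or.inl hgD)),
               Finset.disjoint_filter_filter (Finset.disjoint_product.mpr (Or.inl hgD))⟩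
    rw [Finset.card_union_of_disjoint e2,
        Finset.card_union_of_disjoint (Finset.disjoint_filter_filter d1),
        Finset.card_union_of_disjoint (Finset.disjoint_filter_filter d3)]
    have c0 : ((({g} : Finset G) ×ˢ ({g} : Finset G)).filter (fun p => p.1 - p.2 = x)).card = 0 := by
      rw [Finset.card_eq_zero, Finset.filter_eq_empty_iff]
      intro p hp
      simp only [Finset.mem_product, Finset.mem_singleton] at hp
      rw [hp.1, hp.2, sub_self]
      exact fun h => hx h.symm
    have c1 : ((({g} : Finset G) ×ˢ D).filter (fun p => p.1 - p.2 = x)).card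
        = (if x ∈ A then 1 else 0) := by
      have himg : (({g} : Finset G) ×ˢ D).filter (fun p => p.1 - p.2 = x)
          = (D.filter (fun d => g - d = x)).image (fun d => ((g, d) : G × G)) := by
        ext ⟨a, b⟩
        simp only [Finset.mem_filter, Finset.mem_product, Finset.mem_singleton,
          Finset.mem_image, Prod.mk.injEq]
        constructor
        · rintro ⟨⟨rfl, hb⟩, hab⟩; exact ⟨b, ⟨hb, hab⟩, rfl, rfl⟩
        · rintro ⟨d, ⟨hd, hdx⟩, rfl, rfl⟩; exact ⟨⟨rfl, hd⟩, hdx⟩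
      rw [himg, Finset.card_image_of_injective _ (fun a b h => (Prod.mk.injEq _ _ _ _ ▸ h).2)]
      have : D.filter (fun d => g - d = x) = D.filter (· = g - x) := by
        apply Finset.filter_congr; intro d _
        simp only [eq_comm (a := d), sub_eq_iff_eq_add, eq_sub_iff_add_eq]
        constructor <;> intro h <;> rw [h] <;> abel
      rw [this, Finset.filter_eq']
      have hmem : x ∈ A ↔ g - x ∈ D := by
        simp only [hA, Finset.mem_image]
        constructor
        · rintro ⟨d, hd, rfl⟩; simpa using hd
        · intro h; exact ⟨g - x, h, by abel⟩
      by_cases hxA : x ∈ A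
      · rw [if_pos (hmem.mp hxA), if_pos hxA]; simp
      · rw [if_neg (fun h => hxA (hmem.mpr h)), if_neg hxA]; simp
    have c2 : ((D ×ˢ ({g} : Finset G)).filter (fun p => p.1 - p.2 = x)).card
        = (if x ∈ B then 1 else 0) := by
      have himg : (D ×ˢ ({g} : Finset G)).filter (fun p => p.1 - p.2 = x)
          = (D.filter (fun d => d - g = x)).image (fun d => ((d, g) : G × G)) := by
        ext ⟨a, b⟩
        simp only [Finset.mem_filter, Finset.mem_product, Finset.mem_singleton,
          Finset.mem_image, Prod.mk.injEq]
        constructor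
        · rintro ⟨⟨ha, rfl⟩, hab⟩; exact ⟨a, ⟨ha, hab⟩, rfl, rfl⟩
        · rintro ⟨d, ⟨hd, hdx⟩, rfl, rfl⟩; exact ⟨⟨hd, rfl⟩, hdx⟩
      rw [himg, Finset.card_image_of_injective _ (fun a b h => (Prod.mk.injEq _ _ _ _ ▸ h).1)]
      have : D.filter (fun d => d - g = x) = D.filter (· = x + g) := by
        apply Finset.filter_congr; intro d _
        rw [sub_eq_iff_eq_add]
      rw [this, Finset.filter_eq']
      have hmem : x ∈ B ↔ x + g ∈ D := by
        simp only [hB, Finset.mem_image]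
        constructor
        · rintro ⟨d, hd, rfl⟩; simpa [sub_add_cancel] using hd
        · intro h; exact ⟨x + g, h, by abel⟩
      by_cases hxB : x ∈ B
      · rw [if_pos (hmem.mp hxB), if_pos hxB]; simp
      · rw [if_neg (fun h => hxB (hmem.mpr h)), if_neg hxB]; simp
    have hl := hlam x hx
    unfold diffCount at hl
    rw [c0, c1, c2, hl]
    have hABdisj : Disjoint A B := Finset.disjoint_iff_inter_eq_empty.mpr hint
    by_cases hxA : x ∈ A
    · have hxB : x ∉ B := fun h => (Finset.disjoint_left.mp hABdisj hxA) h
      rw [if_pos hxA, if_neg hxB, if_pos (Finset.mem_union_left _ hxA)]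
      ring
    · by_cases hxB : x ∈ B
      · rw [if_neg hxA, if_pos hxB, if_pos (Finset.mem_union_right _ hxB)]
        ring
      · rw [if_neg hxA, if_neg hxB, if_neg (by simp [hxA, hxB])]
        ring
  -- cardinalities
  have hAcard : A.card = k := by
    rw [hA, Finset.card_image_of_injective _ sub_right_injective, hk]
  have hBcard : B.card = k := by
    rw [hB, Finset.card_image_of_injective _ sub_left_injective, hk]
  have hABdisj : Disjoint A B := Finset.disjoint_iff_inter_eq_empty.mpr hint
  have hABcard : (A ∪ B).card = 2 * k := by
    rw [Finset.card_union_of_disjoint hABdisj, hAcard, hBcard]; ring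
  have h0A : (0 : G) ∉ A := by
    intro h
    obtain ⟨d, hd, hd0⟩ := Finset.mem_image.mp h
    exact hg (by rw [sub_eq_zero.mp hd0]; exact hd)
  have h0B : (0 : G) ∉ B := by
    intro h
    obtain ⟨d, hd, hd0⟩ := Finset.mem_image.mp h
    exact hg (by rw [← sub_eq_zero.mp hd0]; exact hd)
  refine ⟨hv, by rw [Finset.card_insert_of_notMem hg, hk], ?_, ?_⟩
  · have hTeq : univ.filter (fun x : G => x ≠ 0 ∧ diffCount (insert g D) x = lam)
        = univ \ insert 0 (A ∪ B) := by
      ext x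
      simp only [Finset.mem_filter, Finset.mem_univ, true_and, Finset.mem_sdiff,
        Finset.mem_insert, not_or]
      constructor
      · rintro ⟨hx0, hxd⟩
        refine ⟨hx0, fun hxAB => ?_⟩
        rw [key x hx0, if_pos hxAB] at hxd
        omega
      · rintro ⟨hx0, hxAB⟩
        exact ⟨hx0, by rw [key x hx0, if_neg hxAB]; omega⟩
    rw [hTeq, Finset.card_sdiff_of_subset (Finset.subset_univ _), Finset.card_univ, hv,
        Finset.card_insert_of_notMem (by simp [h0A, h0B]), hABcard]
    omega
  · intro x hx
    rw [key x hx]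
    by_cases hxAB : x ∈ A ∪ B
    · right; rw [if_pos hxAB]
    · left; rw [if_neg hxAB]; ring
end

section
/- Let G be a finite abelian group of odd order v, D a (v,k,λ)-difference set in G, and S(D) = {a + b : a, b ∈ D, a ≠ b}. If g ∉ D and 2g ∉ S(D), then D ∪ {g} is a (v, k+1, λ, v-1-2k)-almost difference set. -/
open Finset

lemma eq_zero_of_self_add {G : Type*} [AddCommGroup G] [Fintype G]
    (hodd : Odd (Fintype.card G)) {h : G} (hh : h + h = 0) : h = 0 := by
  have h2 : 2 • h = 0 := by rw [two_nsmul]; exact hh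
  have hd : addOrderOf h ∣ 2 := addOrderOf_dvd_of_nsmul_eq_zero h2
  have hc : addOrderOf h ∣ Fintype.card G := addOrderOf_dvd_card
  rcases (Nat.dvd_prime Nat.prime_two).mp hd with h1 | h2'
  · exact AddMonoid.addOrderOf_eq_one_iff.mp h1
  · exfalso
    have : (2 : ℕ) ∣ Fintype.card G := h2' ▸ hc
    rw [Nat.odd_iff] at hodd
    omega

lemma diffCount_insert {G : Type*} [AddCommGroup G] [DecidableEq G]
    (D : Finset G) (g : G) (hg : g ∉ D) (h : G) (hh : h ≠ 0) :
    diffCount (insert g D) h =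
      diffCount D h + (if g - h ∈ D then 1 else 0) + (if g + h ∈ D then 1 else 0) := by
  classical
  unfold diffCount
  have hset : ((insert g D ×ˢ insert g D).filter (fun p => p.1 - p.2 = h)) =
      ((D ×ˢ D).filter (fun p => p.1 - p.2 = h)) ∪
      (D.filter (fun x => x = g - h)).image (fun x => (g, x)) ∪
      (D.filter (fun x => x = g + h)).image (fun x => (x, g)) := by
    ext ⟨a, b⟩
    simp only [mem_filter, mem_product, mem_insert, mem_union, mem_image, Prod.mk.injEq]
    constructor
    · rintro ⟨⟨ha, hb⟩, hab⟩
      rcases ha with rfl | ha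
      · rcases hb with rfl | hb
        · exact absurd hab (by simpa [eq_comm] using hh)
        · left; right; exact ⟨b, ⟨hb, by rw [← hab]; abel⟩, rfl, rfl⟩
      · rcases hb with rfl | hb
        · right; exact ⟨a, ⟨ha, by rw [← hab]; abel⟩, rfl, rfl⟩
        · left; left; exact ⟨⟨ha, hb⟩, hab⟩
    · rintro ((⟨⟨ha, hb⟩, hab⟩ | ⟨x, ⟨hx, hxe⟩, h1, h2⟩) | ⟨x, ⟨hx, hxe⟩, h1, h2⟩)
      · exact ⟨⟨Or.inr ha, Or.inr hb⟩, hab⟩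
      · subst hxe; subst h2; subst h1
        exact ⟨⟨Or.inl rfl, Or.inr hx⟩, by abel⟩
      · subst hxe; subst h2; subst h1
        exact ⟨⟨Or.inr hx, Or.inl rfl⟩, by abel⟩
  rw [hset]
  have d1 : Disjoint ((D ×ˢ D).filter (fun p => p.1 - p.2 = h))
      ((D.filter (fun x => x = g - h)).image (fun x => (g, x))) := by
    rw [disjoint_left]
    rintro ⟨a, b⟩ hA hB
    simp only [mem_filter, mem_product] at hA
    simp only [mem_image, Prod.mk.injEq] at hB
    obtain ⟨x, _, h1, _⟩ := hB
    exact hg (h1 ▸ hA.1.1)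
  have d2 : Disjoint (((D ×ˢ D).filter (fun p => p.1 - p.2 = h)) ∪
      (D.filter (fun x => x = g - h)).image (fun x => (g, x)))
      ((D.filter (fun x => x = g + h)).image (fun x => (x, g))) := by
    rw [disjoint_left]
    rintro ⟨a, b⟩ hA hB
    simp only [mem_image, mem_filter, Prod.mk.injEq] at hB
    obtain ⟨x, ⟨hx, hxe⟩, h1, h2⟩ := hB
    subst h2
    simp only [mem_union, mem_filter, mem_product, mem_image, Prod.mk.injEq] at hA
    rcases hA with ⟨⟨_, hb⟩, _⟩ | ⟨y, ⟨hy, hye⟩, hg1, hg2⟩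
    · exact hg hb
    · -- b = g and b = y = g - h, so h = 0
      apply hh
      have : g - h = g := by rw [← hye, hg2]
      have := sub_eq_self.mp this
      exact this
  rw [card_union_of_disjoint d2, card_union_of_disjoint d1,
    card_image_of_injective _ (fun x y hxy => (Prod.mk.injEq _ _ _ _ ▸ hxy : _ ∧ _).2),
    card_image_of_injective _ (fun x y hxy => (Prod.mk.injEq _ _ _ _ ▸ hxy : _ ∧ _).1),
    filter_eq', filter_eq']
  split_ifs <;> simp

theorem ads_of_add_sumset {G : Type*} [AddCommGroup G] [Fintype G] [DecidableEq G]
    (v k lam : ℕ) (hodd : Odd v) (D : Finset G) (hD : IsDiffSet v k lam D)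
    (g : G) (hg : g ∉ D) (hsum : g + g ∉ sumset D) :
    IsADS v (k + 1) lam (v - 1 - 2 * k) (insert g D) := by
    classical
  obtain ⟨hv, hk, hlam⟩ := hD
  have hoddG : Odd (Fintype.card G) := hv ▸ hodd
  have hnotboth : ∀ h : G, ¬ (g - h ∈ D ∧ g + h ∈ D) := by
    rintro h ⟨h1, h2⟩
    by_cases hh : h = 0
    · subst hh; simp at h1; exact hg h1
    apply hsum
    refine mem_image.mpr ⟨(g + h, g - h), ?_, by show g + h + (g - h) = g + g; abel⟩
    rw [mem_offDiag]
    refine ⟨h2, h1, fun he => hh ?_⟩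
    apply eq_zero_of_self_add hoddG
    have he' : g + h = g - h := he
    have : (g + h) - (g - h) = 0 := by rw [he']; abel
    calc h + h = (g + h) - (g - h) := by abel
    _ = 0 := this
  have key : ∀ h : G, h ≠ 0 → diffCount (insert g D) h =
      lam + (if g - h ∈ D then 1 else 0) + (if g + h ∈ D then 1 else 0) := by
    intro h hh
    rw [diffCount_insert D g hg h hh, hlam h hh]
  refine ⟨hv, by rw [card_insert_of_notMem hg, hk], ?_, ?_⟩
  · -- counting
    have hBA : univ.filter (fun h : G => g - h ∈ D) = D.image (fun d => g - d) := by
      ext h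
      simp only [mem_filter, mem_univ, true_and, mem_image]
      constructor
      · intro hd; exact ⟨g - h, hd, by abel⟩
      · rintro ⟨d, hd, rfl⟩; simpa using hd
    have hCA : univ.filter (fun h : G => g + h ∈ D) = D.image (fun d => d - g) := by
      ext h
      simp only [mem_filter, mem_univ, true_and, mem_image]
      constructor
      · intro hd; exact ⟨g + h, hd, by abel⟩
      · rintro ⟨d, hd, rfl⟩; simpa using hd
    have hcardB : (univ.filter (fun h : G => g - h ∈ D)).card = k := by
      rw [hBA, card_image_of_injective _ sub_right_injective, hk]
    have hcardC : (univ.filter (fun h : G => g + h ∈ D)).card = k := by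
      rw [hCA, card_image_of_injective _ sub_left_injective, hk]
    have hdisj : Disjoint (univ.filter (fun h : G => g - h ∈ D))
        (univ.filter (fun h : G => g + h ∈ D)) := by
      rw [disjoint_left]
      intro h h1 h2
      simp only [mem_filter, mem_univ, true_and] at h1 h2
      exact hnotboth h ⟨h1, h2⟩
    have hsubset : (univ.filter (fun h : G => g - h ∈ D)) ∪
        (univ.filter (fun h : G => g + h ∈ D)) ⊆ univ.filter (fun h : G => h ≠ 0) := by
      intro h hmem
      simp only [mem_union, mem_filter, mem_univ, true_and] at hmem ⊢
      rintro rfl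
      rcases hmem with h1 | h1 <;> simp at h1 <;> exact hg h1
    have hseteq : univ.filter (fun h : G => h ≠ 0 ∧ diffCount (insert g D) h = lam) =
        univ.filter (fun h : G => h ≠ 0) \
          ((univ.filter (fun h : G => g - h ∈ D)) ∪ (univ.filter (fun h : G => g + h ∈ D))) := by
      ext h
      simp only [mem_sdiff, mem_union, mem_filter, mem_univ, true_and, not_or]
      constructor
      · rintro ⟨hh, hcnt⟩
        refine ⟨hh, ?_, ?_⟩ <;> intro hd <;>
          rw [key h hh] at hcnt <;> simp [hd] at hcnt <;> omega
      · rintro ⟨hh, h1, h2⟩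
        exact ⟨hh, by rw [key h hh]; simp [h1, h2]⟩
    rw [hseteq, card_sdiff_of_subset hsubset, card_union_of_disjoint hdisj, hcardB, hcardC]
    have hne : (univ.filter (fun h : G => h ≠ 0)).card = v - 1 := by
      rw [filter_ne', card_erase_of_mem (mem_univ 0), card_univ, hv]
    rw [hne]
    omega
  · intro h hh
    rw [key h hh]
    by_cases h1 : g - h ∈ D <;> by_cases h2 : g + h ∈ D
    · exact absurd ⟨h1, h2⟩ (hnotboth h)
    all_goals simp [h1, h2]
end
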